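/- Lagrangian dual transform equivalence: for q > 0 and S ≥ 0, q·log(1+S) = max_{γ ≥ 0} [q log(1+γ) - qγ + q(1+γ)·S/(1+S)]; hence for finitely many pairs (qₙ, Sₙ), ∑ₙ qₙ log(1+Sₙ) = max_{γ ∈ ℝ≥0^N} ∑ₙ [qₙ log(1+γₙ) - qₙγₙ + qₙ(1+γₙ)Sₙ/(1+Sₙ)]. -/

import Mathlib

/-!
With `x = (1 + γ) / (1 + S)`, the gap `log (1 + S) - (log (1 + γ) - γ + (1 + γ) S / (1 + S))`
equals `x - 1 - log x`, which is nonnegative and vanishes at `γ = S`. Scaling by `q ≥ 0` and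
summing over the independent coordinates `γₙ` gives both statements.
-/

open Real

noncomputable def lagrangianDualTerm (q S γ : ℝ) : ℝ :=
  q * log (1 + γ) - q * γ + q * (1 + γ) * S / (1 + S)

lemma log_one_add_sub_add_mul_div_le_log_one_add {S γ : ℝ} (hS : -1 < S) (hγ : -1 < γ) :
    log (1 + γ) - γ + (1 + γ) * S / (1 + S) ≤ log (1 + S) := by
  have hS' : 0 < 1 + S := by linarith
  have hγ' : 0 < 1 + γ := by linarith
  have hlog : log (1 + γ) - log (1 + S) ≤ (1 + γ) / (1 + S) - 1 := by
    rw [← log_div hγ'.ne' hS'.ne']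
    exact log_le_sub_one_of_pos (div_pos hγ' hS')
  have hratio : (1 + γ) / (1 + S) - 1 = γ - (1 + γ) * S / (1 + S) := by
    field_simp
    ring
  linarith

lemma lagrangianDualTerm_le {q S γ : ℝ} (hq : 0 ≤ q) (hS : -1 < S) (hγ : -1 < γ) :
    lagrangianDualTerm q S γ ≤ q * log (1 + S) :=
  calc lagrangianDualTerm q S γ = q * (log (1 + γ) - γ + (1 + γ) * S / (1 + S)) := by
        unfold lagrangianDualTerm
        ring
    _ ≤ q * log (1 + S) :=
        mul_le_mul_of_nonneg_left (log_one_add_sub_add_mul_div_le_log_one_add hS hγ) hq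

lemma lagrangianDualTerm_self (q : ℝ) {S : ℝ} (hS : 1 + S ≠ 0) :
    lagrangianDualTerm q S S = q * log (1 + S) := by
  unfold lagrangianDualTerm
  field_simp
  ring

lemma isGreatest_lagrangianDualTerm {q S : ℝ} (hq : 0 ≤ q) (hS : 0 ≤ S) :
    IsGreatest {v | ∃ γ, 0 ≤ γ ∧ v = lagrangianDualTerm q S γ} (q * log (1 + S)) := by
  refine ⟨⟨S, hS, (lagrangianDualTerm_self q (by linarith)).symm⟩, ?_⟩
  rintro v ⟨γ, hγ, rfl⟩
  exact lagrangianDualTerm_le hq (by linarith) (by linarith)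

lemma isGreatest_sum_lagrangianDualTerm {ι : Type*} [Fintype ι] {q S : ι → ℝ}
    (hq : ∀ n, 0 ≤ q n) (hS : ∀ n, 0 ≤ S n) :
    IsGreatest {v | ∃ γ : ι → ℝ, (∀ n, 0 ≤ γ n) ∧ v = ∑ n, lagrangianDualTerm (q n) (S n) (γ n)}
      (∑ n, q n * log (1 + S n)) := by
  refine ⟨⟨S, hS, Finset.sum_congr rfl fun n _ =>
    (lagrangianDualTerm_self (q n) (by linarith [hS n])).symm⟩, ?_⟩
  rintro v ⟨γ, hγ, rfl⟩
  exact Finset.sum_le_sum fun n _ =>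
    lagrangianDualTerm_le (hq n) (by linarith [hS n]) (by linarith [hγ n])

/-- Lagrangian dual transform equivalence (Lemma 2): single term and sum form. -/
theorem lagrangian_dual_equivalence (N : ℕ) (q S : Fin N → ℝ)
    (hq : ∀ n, 0 < q n) (hS : ∀ n, 0 ≤ S n) :
    (∀ q0 S0 : ℝ, 0 < q0 → 0 ≤ S0 →
      IsGreatest
        {v : ℝ | ∃ γ : ℝ, 0 ≤ γ ∧
          v = q0 * Real.log (1 + γ) - q0 * γ + q0 * (1 + γ) * S0 / (1 + S0)}
        (q0 * Real.log (1 + S0))) ∧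
    IsGreatest
      {v : ℝ | ∃ γ : Fin N → ℝ, (∀ n, 0 ≤ γ n) ∧
        v = ∑ n, (q n * Real.log (1 + γ n) - q n * γ n
              + q n * (1 + γ n) * S n / (1 + S n))}
      (∑ n, q n * Real.log (1 + S n)) :=
  ⟨fun _ _ hq0 hS0 => isGreatest_lagrangianDualTerm hq0.le hS0,
    isGreatest_sum_lagrangianDualTerm (fun n => (hq n).le) hS⟩
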